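/- A set of 0-1 values x_{i,j} satisfies the MWTM ILP constraints if and only if the induced relation {(i,j) : x_{i,j} = 1} is a feasible assignment: an injection from tasks to nodes whose image is an antichain in the tree. -/

import Mathlib

attribute [local instance] Classical.propDecidable

/-- A rooted tree on a finite vertex type `V`, given by a parent function. -/
structure OrgTree (V : Type) [Fintype V] [DecidableEq V] where
  root : V
  parent : V → V
  parent_root : parent root = root
  reach : ∀ v : V, ∃ k : ℕ, parent^[k] v = root

variable {V : Type} [Fintype V] [DecidableEq V]

/-- `T.Anc u v` : `u` is a (weak) ancestor of `v`, i.e. `u` lies on the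
path from the root to `v`. -/
def OrgTree.Anc (T : OrgTree V) (u v : V) : Prop :=
  ∃ k : ℕ, T.parent^[k] v = u

/-- A leaf is a node with no children. -/
def OrgTree.IsLeaf (T : OrgTree V) (v : V) : Prop :=
  ∀ u : V, T.parent u = v → u = v

/-- An antichain: no element is a (weak) ancestor of another distinct element. -/
def OrgTree.IsAntichain (T : OrgTree V) (S : Set V) : Prop :=
  ∀ u ∈ S, ∀ v ∈ S, u ≠ v → ¬ T.Anc u v

/-- Feasibility for the LP relaxation of the MWTM ILP:
nonnegativity, per-node sums at most 1, per-task sums equal to 1, and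
for every leaf the total assignment along the root-to-leaf path at most 1. -/
def LPFeasible (T : OrgTree V) (m : ℕ) (x : V → Fin m → ℝ) : Prop :=
  (∀ i j, 0 ≤ x i j) ∧
  (∀ i : V, ∑ j : Fin m, x i j ≤ 1) ∧
  (∀ j : Fin m, ∑ i : V, x i j = 1) ∧
  (∀ k : V, T.IsLeaf k →
    ∑ i ∈ Finset.univ.filter (fun i => T.Anc i k), ∑ j : Fin m, x i j ≤ 1)

/-- An effective leaf w.r.t. `x`: a node with a positive assignment none of
whose strict descendants has a positive assignment. -/
def EffLeaf (T : OrgTree V) (m : ℕ) (x : V → Fin m → ℝ) (i : V) : Prop :=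
  (∃ j : Fin m, 0 < x i j) ∧
    ∀ v : V, T.Anc i v → v ≠ i → ∀ j : Fin m, x v j = 0

/-! For 0-1 values every constraint counts ones. A column sum equal to 1 makes `x` the matrix of a
map `f` from tasks to nodes; row sums at most 1 say that `f` is injective; and the constraint of a
leaf `k` says that at most one task is placed on the path from the root to `k`. Two ancestors of a
common node are comparable and every node lies above a leaf, so the path constraints hold for all
leaves exactly when the image of `f` is an antichain. -/

namespace OrgTree

variable (T : OrgTree V)

theorem anc_refl (v : V) : T.Anc v v := ⟨0, rfl⟩

theorem Anc.trans {T : OrgTree V} {u v w : V} (huv : T.Anc u v) (hvw : T.Anc v w) :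
    T.Anc u w := by
  obtain ⟨a, rfl⟩ := huv
  obtain ⟨b, rfl⟩ := hvw
  exact ⟨a + b, Function.iterate_add_apply _ _ _ _⟩

theorem Anc.total {T : OrgTree V} {u v w : V} (huw : T.Anc u w) (hvw : T.Anc v w) :
    T.Anc u v ∨ T.Anc v u := by
  obtain ⟨a, rfl⟩ := huw
  obtain ⟨b, rfl⟩ := hvw
  rcases le_total a b with hab | hab
  · exact Or.inr ⟨b - a, by rw [← Function.iterate_add_apply, Nat.sub_add_cancel hab]⟩
  · exact Or.inl ⟨a - b, by rw [← Function.iterate_add_apply, Nat.sub_add_cancel hab]⟩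

noncomputable def depth (v : V) : ℕ := Nat.find (T.reach v)

theorem depth_parent_lt {u : V} (hu : T.parent u ≠ u) : T.depth (T.parent u) < T.depth u := by
  obtain ⟨d, hd⟩ : ∃ d, T.depth u = d + 1 := by
    refine Nat.exists_eq_succ_of_ne_zero fun h0 => hu ?_
    have hroot : u = T.root := by
      rw [depth] at h0
      simpa [h0] using Nat.find_spec (T.reach u)
    rw [hroot, T.parent_root]
  have hreach : T.parent^[d] (T.parent u) = T.root := by
    have : T.parent^[T.depth u] u = T.root := Nat.find_spec (T.reach u)
    rwa [hd, Function.iterate_succ_apply] at this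
  exact hd ▸ Nat.lt_succ_of_le (Nat.find_min' _ hreach)

theorem exists_isLeaf_anc (v : V) : ∃ k, T.IsLeaf k ∧ T.Anc v k := by
  have : Nonempty {w // T.Anc v w} := ⟨⟨v, T.anc_refl v⟩⟩
  -- a descendant of maximal depth is a leaf
  obtain ⟨⟨k, hvk⟩, hmax⟩ := Finite.exists_max fun w : {w // T.Anc v w} => T.depth w
  refine ⟨k, fun u hu => ?_, hvk⟩
  by_contra hne
  have hvu : T.Anc v u := hvk.trans ⟨1, hu⟩
  have hlt : T.depth k < T.depth u := hu ▸ T.depth_parent_lt (by rwa [hu, ne_comm])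
  exact (hmax ⟨u, hvu⟩).not_gt hlt

theorem isAntichain_iff_forall_isLeaf {S : Set V} :
    T.IsAntichain S ↔
      ∀ k, T.IsLeaf k → ∀ u ∈ S, ∀ v ∈ S, T.Anc u k → T.Anc v k → u = v := by
  constructor
  · intro hS k _ u hu v hv huk hvk
    by_contra hne
    rcases huk.total hvk with huv | hvu
    · exact hS u hu v hv hne huv
    · exact hS v hv u hu (Ne.symm hne) hvu
  · intro hS u hu v hv hne huv
    obtain ⟨k, hk, hvk⟩ := T.exists_isLeaf_anc v
    exact hne (hS k hk u hu v hv (huv.trans hvk) hvk)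

end OrgTree

section ZeroOne

variable {ι R : Type*} [Fintype ι] [Semiring R] [CharZero R]

theorem sum_boole_le_one_iff [PartialOrder R] [IsOrderedRing R] (p : ι → Prop) [DecidablePred p] :
    ∑ a, (if p a then 1 else 0 : R) ≤ 1 ↔ ∀ a b, p a → p b → a = b := by
  rw [Finset.sum_boole, Nat.cast_le_one, Finset.card_le_one]
  simp only [Finset.mem_filter_univ]
  exact ⟨fun h a b ha hb => h a ha b hb, fun h a ha b hb => h a b ha hb⟩

theorem sum_eq_one_iff_existsUnique_eq_one {g : ι → R} (h01 : ∀ a, g a = 0 ∨ g a = 1) :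
    ∑ a, g a = 1 ↔ ∃! a, g a = 1 := by
  have hg : ∀ a, g a = if g a = 1 then 1 else 0 := fun a => by
    rcases h01 a with h | h <;> simp [h]
  rw [Finset.sum_congr rfl fun a _ => hg a, Finset.sum_boole, Nat.cast_eq_one,
    Fintype.existsUnique_iff_card_one]

end ZeroOne

def assignmentMatrix {m : ℕ} (f : Fin m → V) : V → Fin m → ℝ :=
  fun i j => if f j = i then 1 else 0

omit [Fintype V] in
theorem eq_assignmentMatrix_iff {m : ℕ} {x : V → Fin m → ℝ}
    (h01 : ∀ i j, x i j = 0 ∨ x i j = 1) (f : Fin m → V) :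
    x = assignmentMatrix f ↔ ∀ i j, x i j = 1 ↔ f j = i := by
  refine ⟨fun hx i j => by simp [hx, assignmentMatrix], fun hf => ?_⟩
  ext i j
  rcases h01 i j with h | h <;> simp [assignmentMatrix, ← hf i j, h]

theorem exists_eq_assignmentMatrix {m : ℕ} {x : V → Fin m → ℝ}
    (h01 : ∀ i j, x i j = 0 ∨ x i j = 1) (htask : ∀ j, ∑ i, x i j = 1) :
    ∃ f : Fin m → V, x = assignmentMatrix f := by
  choose f hf huniq using fun j => (sum_eq_one_iff_existsUnique_eq_one (h01 · j)).1 (htask j)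
  exact ⟨f, (eq_assignmentMatrix_iff h01 f).2 fun i j =>
    ⟨fun h => (huniq j i h).symm, fun h => h ▸ hf j⟩⟩

theorem sum_path_assignmentMatrix (T : OrgTree V) {m : ℕ} (f : Fin m → V) (k : V) :
    ∑ i ∈ Finset.univ.filter (T.Anc · k), ∑ j, assignmentMatrix f i j =
      ∑ j, if T.Anc (f j) k then 1 else 0 := by
  rw [Finset.sum_comm]
  simp [assignmentMatrix]

theorem lpFeasible_assignmentMatrix_iff (T : OrgTree V) {m : ℕ} (f : Fin m → V) :
    LPFeasible T m (assignmentMatrix f) ↔ Function.Injective f ∧ T.IsAntichain (Set.range f) := by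
  have hnonneg (i : V) (j : Fin m) : 0 ≤ assignmentMatrix f i j := by
    unfold assignmentMatrix; positivity
  have htask (j : Fin m) : ∑ i, assignmentMatrix f i j = 1 := by simp [assignmentMatrix]
  have hinj : (∀ i a b, f a = i → f b = i → a = b) ↔ Function.Injective f :=
    ⟨fun h a b hab => h _ a b hab rfl, fun h _ _ _ ha hb => h (ha.trans hb.symm)⟩
  have hnode (i : V) : ∑ j, assignmentMatrix f i j ≤ 1 ↔ ∀ a b, f a = i → f b = i → a = b :=
    sum_boole_le_one_iff _
  simp only [LPFeasible, hnode, sum_path_assignmentMatrix, sum_boole_le_one_iff,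
    T.isAntichain_iff_forall_isLeaf, Set.forall_mem_range, hnonneg, htask, hinj,
    implies_true, true_and]
  exact and_congr_right fun hf => by simp only [hf.eq_iff]

/-- 0-1 values `x` satisfy the MWTM ILP constraints iff the
relation `{(i,j) : x_{i,j} = 1}` is a feasible assignment: an injection from
tasks to nodes whose image is an antichain in the tree. -/
theorem ilp_iff_feasible_assignment (T : OrgTree V) (m : ℕ)
    (x : V → Fin m → ℝ) (h01 : ∀ i j, x i j = 0 ∨ x i j = 1) :
    LPFeasible T m x ↔
      ∃ f : Fin m → V, Function.Injective f ∧ T.IsAntichain (Set.range f) ∧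
        ∀ (i : V) (j : Fin m), (x i j = 1 ↔ f j = i) := by
  simp_rw [← eq_assignmentMatrix_iff h01]
  constructor
  · intro hx
    obtain ⟨f, rfl⟩ := exists_eq_assignmentMatrix h01 hx.2.2.1
    obtain ⟨hinj, hanti⟩ := (lpFeasible_assignmentMatrix_iff T f).1 hx
    exact ⟨f, hinj, hanti, rfl⟩
  · rintro ⟨f, hinj, hanti, rfl⟩
    exact (lpFeasible_assignmentMatrix_iff T f).2 ⟨hinj, hanti⟩
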